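/- If a chain code U over the alphabet {L, R, S} satisfies qturn(P) ∈ {-1, 0, 1} for every prefix P of U, then the unfolding dual path of U (the orthogonal unit-step lattice path starting at (0,0) heading in direction (0,1), where L turns left, R turns right, and S continues straight) visits pairwise distinct lattice points. -/

import Mathlib

inductive TurnSym : Type
  | L | R | S
deriving DecidableEq

def qt : TurnSym → ℤ
  | TurnSym.L => -1
  | TurnSym.R => 1
  | TurnSym.S => 0

def qturn (U : List TurnSym) : ℤ := (U.map qt).sum

def rot : TurnSym → ℤ × ℤ → ℤ × ℤ
  | TurnSym.R, d => (d.2, -d.1)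
  | TurnSym.L, d => (-d.2, d.1)
  | TurnSym.S, d => d

def pathStep (s : (ℤ × ℤ) × (ℤ × ℤ)) (a : TurnSym) : (ℤ × ℤ) × (ℤ × ℤ) :=
  let d := rot a s.2
  (s.1 + d, d)

/-- Points p_0 = (0,0), p_1 = (0,1), ..., p_{n+1} of the unfolding dual path. -/
def pts (U : List TurnSym) : List (ℤ × ℤ) :=
  (0, 0) :: (List.scanl pathStep ((0, 1), (0, 1)) U).map Prod.fst

/-- 90° clockwise rotation. -/
def cw (d : ℤ × ℤ) : ℤ × ℤ := (d.2, -d.1)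

/-- Final heading after processing a chain code from initial heading (0,1). -/
def headAfter (U : List TurnSym) : ℤ × ℤ := U.foldl (fun d a => rot a d) (0, 1)

/-- Reflection of a chain code: swap L and R. -/
def reflCode (U : List TurnSym) : List TurnSym :=
  U.map fun a => match a with
    | TurnSym.L => TurnSym.R
    | TurnSym.R => TurnSym.L
    | TurnSym.S => TurnSym.S

/-- Action of a chain code on an arbitrary initial heading. -/
def act (U : List TurnSym) (d : ℤ × ℤ) : ℤ × ℤ := U.foldl (fun d a => rot a d) d

/-!
Under the hypothesis the heading is always up, left or right, never down, and it never
reverses from left to right or back in a single turn. So the path never descends, and along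
each row it moves in one direction only: every point after `p` lies strictly above `p`, or on
its row strictly on the side the path is heading to. This region is invariant along the walk,
which gives injectivity.
-/

/-- The heading after a net turn `q ∈ {-1, 0, 1}` from the initial heading `(0, 1)`. -/
def headingOf (q : ℤ) : ℤ × ℤ := (q, 1 - |q|)

/-- The points reachable from `p` when heading with net turn `q`, on a path that never turns
down: strictly higher rows, and the part of the row of `p` not behind `p`. -/
def Ahead (p : ℤ × ℤ) (q : ℤ) (z : ℤ × ℤ) : Prop :=
  p.2 < z.2 ∨ (z.2 = p.2 ∧ 0 ≤ (z.1 - p.1) * q)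

lemma ahead_self (p : ℤ × ℤ) (q : ℤ) : Ahead p q p :=
  Or.inr ⟨rfl, by simp⟩

lemma rot_headingOf {a : TurnSym} {q : ℤ} (hq : q ∈ ({-1, 0, 1} : Set ℤ))
    (hqa : q + qt a ∈ ({-1, 0, 1} : Set ℤ)) :
    rot a (headingOf q) = headingOf (q + qt a) := by
  cases a <;> rcases hq with rfl | rfl | rfl <;> simp_all [rot, qt, headingOf]

lemma Ahead.of_step {p z : ℤ × ℤ} {q q' : ℤ} (hq : q ∈ ({-1, 0, 1} : Set ℤ))
    (hq' : q' ∈ ({-1, 0, 1} : Set ℤ)) (hqq' : |q' - q| ≤ 1)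
    (hz : Ahead (p + headingOf q') q' z) : Ahead p q z ∧ z ≠ p := by
  obtain ⟨x, y⟩ := z
  obtain ⟨px, py⟩ := p
  rcases hq with rfl | rfl | rfl <;> rcases hq' with rfl | rfl | rfl <;>
    simp_all [Ahead, headingOf] <;> omega

lemma qt_abs_le_one (a : TurnSym) : |qt a| ≤ 1 := by
  cases a <;> simp [qt]

lemma scanl_pathStep_nodup_and_ahead (U : List TurnSym) (p : ℤ × ℤ) (q : ℤ)
    (hU : ∀ P, P <+: U → q + qturn P ∈ ({-1, 0, 1} : Set ℤ)) :
    ((List.scanl pathStep (p, headingOf q) U).map Prod.fst).Nodup ∧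
      ∀ z ∈ (List.scanl pathStep (p, headingOf q) U).map Prod.fst, Ahead p q z := by
  induction U generalizing p q with
  | nil => simpa using ahead_self p q
  | cons a l ih =>
    have hq : q ∈ ({-1, 0, 1} : Set ℤ) := by simpa [qturn] using hU [] List.nil_prefix
    have hqa : q + qt a ∈ ({-1, 0, 1} : Set ℤ) := by
      simpa [qturn] using hU [a] (List.singleton_prefix_cons_iff.2 rfl)
    have hstep :
        pathStep (p, headingOf q) a = (p + headingOf (q + qt a), headingOf (q + qt a)) := by
      simp [pathStep, rot_headingOf hq hqa]
    obtain ⟨hnodup, hahead⟩ := ih (p + headingOf (q + qt a)) (q + qt a) fun P hP => by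
      simpa [qturn, add_assoc] using hU (a :: P) (List.cons_prefix_cons.2 ⟨rfl, hP⟩)
    have hback (z) (hz : z ∈ (List.scanl pathStep
        (p + headingOf (q + qt a), headingOf (q + qt a)) l).map Prod.fst) :=
      (hahead z hz).of_step hq hqa (by simpa using qt_abs_le_one a)
    rw [List.scanl_cons, hstep, List.map_cons, List.nodup_cons]
    exact ⟨⟨fun hp => (hback p hp).2 rfl, hnodup⟩,
      List.forall_mem_cons.2 ⟨ahead_self p q, fun z hz => (hback z hz).1⟩⟩

lemma pts_eq_scanl (U : List TurnSym) :
    pts U = (List.scanl pathStep ((0, 0), headingOf 0) (TurnSym.S :: U)).map Prod.fst := by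
  simp [pts, headingOf, pathStep, rot]

theorem stmt0 (U : List TurnSym)
    (h : ∀ P, P <+: U → qturn P ∈ ({-1, 0, 1} : Set ℤ)) :
    (pts U).Nodup := by
  rw [pts_eq_scanl]
  refine (scanl_pathStep_nodup_and_ahead _ _ 0 fun P hP => ?_).1
  rcases P with _ | ⟨a, P⟩
  · simp [qturn]
  · obtain ⟨rfl, hPU⟩ := List.cons_prefix_cons.1 hP
    simpa [qturn, qt] using h P hPU
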